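/- arXiv:2002.05399 — 2 statements merged into one kernel-verified Lean document; each statement's English description precedes it below -/
import Mathlib

section
/- Let q ≥ 1, let D > 0 and 0 < R < 1/D. Let V ⊆ ℂ × ℂ^{q−1} be an open neighborhood of the origin and let r : V → ℝ be a function satisfying 0 ≤ r(η₁, η') ≤ D(|Re η₁|⁴ + ‖η'‖⁴) for all (η₁, η') ∈ V. Define Ω' := {(η₁, η') ∈ V : Im η₁ > ‖η'‖² + |η₁|²/R − r(η₁, η')}. Then there exists ρ > 0 with B(0,ρ) ⊆ V such that {(η₁,η') : Im η₁ > ‖η'‖² + |η₁|²/R} ∩ B(0,ρ) ⊆ Ω' ∩ B(0,ρ) ⊆ {(η₁,η') : Im η₁ > ‖η'‖²} ∩ B(0,ρ). -/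
open Set

/-!
Near the origin the perturbation is negligible: for `‖η₁‖ ≤ 1` and `RD ≤ 1` one has
`R r(η) ≤ (Re η₁)² + ‖η'‖⁴`, so multiplying the defining inequality of `Ω'` by `R` leaves
`(Im η₁ - ‖η'‖²)(R - Im η₁ - ‖η'‖²) > 0`, whose second factor is positive on the ball of radius
`ρ ≤ R / 2`. The horosphere lies in `Ω'` simply because `r ≥ 0`.
-/

theorem sq_lt_im_of_gt_perturbed_horosphere {R D t r : ℝ} {z : ℂ} (hR : 0 < R)
    (hRD : R * D ≤ 1) (hz : ‖z‖ ≤ 1) (hzt : z.im + t ^ 2 < R)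
    (hr : r ≤ D * (|z.re| ^ 4 + t ^ 4)) (h : z.im > t ^ 2 + ‖z‖ ^ 2 / R - r) :
    t ^ 2 < z.im := by
  have hre4 : |z.re| ^ 4 ≤ z.re ^ 2 := by
    rw [← sq_abs z.re]
    exact pow_le_pow_of_le_one (abs_nonneg _) ((Complex.abs_re_le_norm z).trans hz) (by norm_num)
  have hRr : R * r ≤ z.re ^ 2 + t ^ 4 :=
    calc R * r ≤ R * D * (|z.re| ^ 4 + t ^ 4) := by
          rw [mul_assoc]; exact mul_le_mul_of_nonneg_left hr hR.le
      _ ≤ |z.re| ^ 4 + t ^ 4 := mul_le_of_le_one_left (by positivity) hRD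
      _ ≤ z.re ^ 2 + t ^ 4 := by linarith
  have hscaled : ‖z‖ ^ 2 < (z.im - t ^ 2 + r) * R := (div_lt_iff₀ hR).mp (by linarith)
  have hprod : 0 < (z.im - t ^ 2) * (R - (z.im + t ^ 2)) := by
    nlinarith [Complex.sq_norm_sub_sq_re z]
  exact sub_pos.mp (pos_of_mul_pos_left hprod (sub_pos.mpr hzt).le)

theorem mem_ball_zero_of_sq_norm_add_sq_norm_lt {E F : Type*} [SeminormedAddCommGroup E]
    [SeminormedAddCommGroup F] {x : E × F} {ρ : ℝ} (hρ : 0 ≤ ρ)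
    (h : ‖x.1‖ ^ 2 + ‖x.2‖ ^ 2 < ρ ^ 2) : x ∈ Metric.ball 0 ρ := by
  rw [mem_ball_zero_iff, Prod.norm_def]
  exact max_lt (lt_of_pow_lt_pow_left₀ 2 hρ (by nlinarith [sq_nonneg ‖x.2‖]))
    (lt_of_pow_lt_pow_left₀ 2 hρ (by nlinarith [sq_nonneg ‖x.1‖]))

theorem im_add_sq_norm_lt_of_mem_ball {E : Type*} [SeminormedAddCommGroup E] {η : ℂ × E}
    {ρ : ℝ} (hρ : ρ ≤ 1) (hη : η ∈ Metric.ball 0 ρ) : η.1.im + ‖η.2‖ ^ 2 < 2 * ρ := by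
  rw [mem_ball_zero_iff] at hη
  have him : η.1.im < ρ :=
    (le_abs_self _).trans_lt ((Complex.abs_im_le_norm _).trans_lt ((norm_fst_le η).trans_lt hη))
  have hsq : ‖η.2‖ ^ 2 < ρ := by nlinarith [norm_nonneg η.2, (norm_snd_le η).trans_lt hη]
  linarith

theorem horosphere_subset_perturbed_subset_siegel_general
    (q : ℕ) (D R : ℝ) (hD : 0 < D) (hR : 0 < R) (hRD : R < 1 / D)
    (V : Set (ℂ × EuclideanSpace ℂ (Fin (q - 1)))) (hV : IsOpen V)
    (h0V : ((0, 0) : ℂ × EuclideanSpace ℂ (Fin (q - 1))) ∈ V)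
    (r : ℂ × EuclideanSpace ℂ (Fin (q - 1)) → ℝ)
    (hr0 : ∀ η ∈ V, 0 ≤ r η)
    (hrD : ∀ η ∈ V, r η ≤ D * (|η.1.re| ^ 4 + ‖η.2‖ ^ 4)) :
    ∃ ρ > (0 : ℝ),
      {η : ℂ × EuclideanSpace ℂ (Fin (q - 1)) | ‖η.1‖ ^ 2 + ‖η.2‖ ^ 2 < ρ ^ 2} ⊆ V ∧
      {η : ℂ × EuclideanSpace ℂ (Fin (q - 1)) | η.1.im > ‖η.2‖ ^ 2 + ‖η.1‖ ^ 2 / R} ∩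
          {η | ‖η.1‖ ^ 2 + ‖η.2‖ ^ 2 < ρ ^ 2} ⊆
        {η ∈ V | η.1.im > ‖η.2‖ ^ 2 + ‖η.1‖ ^ 2 / R - r η} ∩
          {η | ‖η.1‖ ^ 2 + ‖η.2‖ ^ 2 < ρ ^ 2} ∧
      {η ∈ V | η.1.im > ‖η.2‖ ^ 2 + ‖η.1‖ ^ 2 / R - r η} ∩
          {η | ‖η.1‖ ^ 2 + ‖η.2‖ ^ 2 < ρ ^ 2} ⊆
        {η : ℂ × EuclideanSpace ℂ (Fin (q - 1)) | η.1.im > ‖η.2‖ ^ 2} ∩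
          {η | ‖η.1‖ ^ 2 + ‖η.2‖ ^ 2 < ρ ^ 2} := by
  obtain ⟨ε, hε, hεV⟩ := Metric.isOpen_iff.mp hV _ h0V
  set ρ := min ε (min 1 (R / 2))
  have hρ : 0 < ρ := lt_min hε (lt_min one_pos (by positivity))
  have hρ1 : ρ ≤ 1 := (min_le_right _ _).trans (min_le_left _ _)
  have hρR : 2 * ρ ≤ R := by linarith [(min_le_right ε _).trans (min_le_right 1 (R / 2))]
  have hball : ∀ η : ℂ × EuclideanSpace ℂ (Fin (q - 1)),
      ‖η.1‖ ^ 2 + ‖η.2‖ ^ 2 < ρ ^ 2 → η ∈ Metric.ball 0 ρ :=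
    fun η => mem_ball_zero_of_sq_norm_add_sq_norm_lt hρ.le
  have hsubV : {η : ℂ × EuclideanSpace ℂ (Fin (q - 1)) | ‖η.1‖ ^ 2 + ‖η.2‖ ^ 2 < ρ ^ 2} ⊆ V :=
    fun η hη => hεV (Metric.ball_subset_ball (min_le_left _ _) (hball η hη))
  refine ⟨ρ, hρ, hsubV, ?_, ?_⟩
  · rintro η ⟨hE, hη⟩
    exact ⟨⟨hsubV hη, by linarith [hr0 η (hsubV hη), hE.out]⟩, hη⟩
  · rintro η ⟨⟨hηV, hΩ⟩, hη⟩
    have hη₁ : ‖η.1‖ ≤ 1 :=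
      ((norm_fst_le η).trans (mem_ball_zero_iff.mp (hball η hη)).le).trans hρ1
    exact ⟨sq_lt_im_of_gt_perturbed_horosphere hR ((lt_div_iff₀ hD).mp hRD).le hη₁
      ((im_add_sq_norm_lt_of_mem_ball hρ1 (hball η hη)).trans_le hρR) (hrD η hηV) hΩ, hη⟩

/-- Local comparison of a perturbed Siegel domain with a horosphere and the Siegel
half-space: if `Ω' = {η ∈ V : Im η₁ > ‖η'‖² + |η₁|²/R − r(η)}` where
`0 ≤ r(η) ≤ D(|Re η₁|⁴ + ‖η'‖⁴)` and `0 < R < 1/D`, then near the origin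
`E_{ℍ^q}(I,0,R) ⊆ Ω' ⊆ ℍ^q`. -/
theorem horosphere_subset_perturbed_subset_siegel
    (q : ℕ) (hq : 1 ≤ q) (D R : ℝ) (hD : 0 < D) (hR : 0 < R) (hRD : R < 1 / D)
    (V : Set (ℂ × EuclideanSpace ℂ (Fin (q - 1)))) (hV : IsOpen V)
    (h0V : ((0, 0) : ℂ × EuclideanSpace ℂ (Fin (q - 1))) ∈ V)
    (r : ℂ × EuclideanSpace ℂ (Fin (q - 1)) → ℝ)
    (hr0 : ∀ η ∈ V, 0 ≤ r η)
    (hrD : ∀ η ∈ V, r η ≤ D * (|η.1.re| ^ 4 + ‖η.2‖ ^ 4)) :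
    ∃ ρ > (0 : ℝ),
      {η : ℂ × EuclideanSpace ℂ (Fin (q - 1)) | ‖η.1‖ ^ 2 + ‖η.2‖ ^ 2 < ρ ^ 2} ⊆ V ∧
      {η : ℂ × EuclideanSpace ℂ (Fin (q - 1)) | η.1.im > ‖η.2‖ ^ 2 + ‖η.1‖ ^ 2 / R} ∩
          {η | ‖η.1‖ ^ 2 + ‖η.2‖ ^ 2 < ρ ^ 2} ⊆
        {η ∈ V | η.1.im > ‖η.2‖ ^ 2 + ‖η.1‖ ^ 2 / R - r η} ∩
          {η | ‖η.1‖ ^ 2 + ‖η.2‖ ^ 2 < ρ ^ 2} ∧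
      {η ∈ V | η.1.im > ‖η.2‖ ^ 2 + ‖η.1‖ ^ 2 / R - r η} ∩
          {η | ‖η.1‖ ^ 2 + ‖η.2‖ ^ 2 < ρ ^ 2} ⊆
        {η : ℂ × EuclideanSpace ℂ (Fin (q - 1)) | η.1.im > ‖η.2‖ ^ 2} ∩
          {η | ‖η.1‖ ^ 2 + ‖η.2‖ ^ 2 < ρ ^ 2} :=
  horosphere_subset_perturbed_subset_siegel_general q D R hD hR hRD V hV h0V r hr0 hrD
end

section
/- Let R > 0. The map T(w₁, w') := (R w₁/(R − i w₁), R w'/(R − i w₁)) is well defined on the Siegel half-space H^q (since R − i w₁ ≠ 0 when Im w₁ > 0), and it maps H^q bijectively onto the horosphere E_{H^q}(I, 0, R) = {(η₁, η') ∈ ℂ × ℂ^{q−1} : Im η₁ > ‖η'‖² + |η₁|²/R}. -/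
/-!
Write `T_c(w₁, w') = (R w₁/(R − c w₁), R w'/(R − c w₁))`, so the map is `T_i`. In the first
coordinate `T_c` is `z ↦ 1/(1/z − c/R)`, a translation conjugated by inversion, hence
`T_b ∘ T_a = T_{a+b}` and `T_i` is inverted by `T_{−i}`. For purely imaginary `c` the height
`h_t(w) = Im w₁ − t |w₁|² − ‖w'‖²` transforms as `h_{t + Im c / R}(T_c w) = R² / |R − c w₁|² · h_t(w)`;
since the Siegel half-space is `{h_0 > 0}` and the horosphere is `{h_{1/R} > 0}`, `T_i` maps the
first into the second and `T_{−i}` maps it back.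
-/

open Set Complex

section Height

variable {E : Type*} [NormedAddCommGroup E]

noncomputable def horoHeight (t : ℝ) (w : ℂ × E) : ℝ :=
  w.1.im - t * ‖w.1‖ ^ 2 - ‖w.2‖ ^ 2

lemma im_pos_of_horoHeight_zero_pos {w : ℂ × E} (hw : 0 < horoHeight 0 w) : 0 < w.1.im := by
  unfold horoHeight at hw
  nlinarith [sq_nonneg ‖w.2‖]

lemma ofReal_sub_I_mul_ne_zero {R : ℝ} (hR : 0 ≤ R) {z : ℂ} (hz : 0 < z.im) :
    (R : ℂ) - I * z ≠ 0 := by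
  intro h
  have hre := congrArg re h
  simp only [sub_re, ofReal_re, mul_re, I_re, I_im, zero_mul, one_mul, zero_sub, sub_neg_eq_add,
    zero_re] at hre
  linarith

lemma ofReal_sub_neg_I_mul_ne_zero_of_horoHeight_pos {R : ℝ} {w : ℂ × E}
    (hw : 0 < horoHeight R⁻¹ w) : (R : ℂ) - -I * w.1 ≠ 0 := by
  intro h
  have hw1 : w.1 = R * I := by linear_combination (-I) * h + w.1 * I_sq
  have hRR : R⁻¹ * R ^ 2 = R := by rcases eq_or_ne R 0 with rfl | hR <;> field_simp
  simp only [horoHeight, hw1, norm_mul, norm_real, norm_I, mul_one, Real.norm_eq_abs, sq_abs,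
    mul_im, ofReal_re, I_im, ofReal_im, I_re, mul_zero, add_zero, hRR, sub_self, zero_sub] at hw
  nlinarith [sq_nonneg ‖w.2‖]

end Height

section MobiusShift

variable {E : Type*} [NormedAddCommGroup E] [NormedSpace ℂ E]

noncomputable def mobiusShift (R c : ℂ) (w : ℂ × E) : ℂ × E :=
  (R * w.1 / (R - c * w.1), (R / (R - c * w.1)) • w.2)

lemma mobiusShift_zero {R : ℂ} (hR : R ≠ 0) (w : ℂ × E) : mobiusShift R 0 w = w := by
  simp [mobiusShift, hR]

lemma mobiusShift_mobiusShift {R : ℂ} (hR : R ≠ 0) (a b : ℂ) {w : ℂ × E}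
    (hw : R - a * w.1 ≠ 0) :
    mobiusShift R b (mobiusShift R a w) = mobiusShift R (a + b) w := by
  have hden : R - b * (R * w.1 / (R - a * w.1)) = R * (R - (a + b) * w.1) / (R - a * w.1) := by
    rw [eq_div_iff hw, sub_mul, mul_assoc b, div_mul_cancel₀ _ hw]; ring
  have hfactor : R / (R - b * (R * w.1 / (R - a * w.1))) * (R / (R - a * w.1))
      = R / (R - (a + b) * w.1) := by
    rw [hden, div_div_eq_mul_div, mul_div_mul_left _ _ hR, div_mul_div_comm, mul_comm,
      mul_div_mul_right _ _ hw]
  simp only [mobiusShift, Prod.mk.injEq, smul_smul, hfactor, and_true]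
  calc _ = R / (R - b * (R * w.1 / (R - a * w.1))) * (R / (R - a * w.1)) * w.1 := by ring
    _ = _ := by rw [hfactor]; ring

lemma im_ofReal_mul_div_sub_mul (R : ℝ) {c : ℂ} (hc : c.re = 0) (z : ℂ) :
    (R * z / (R - c * z)).im = R ^ 2 / normSq (R - c * z) * (z.im + c.im / R * ‖z‖ ^ 2) := by
  rcases eq_or_ne R 0 with rfl | hR
  · simp
  by_cases hD : (R : ℂ) - c * z = 0
  · simp [hD]
  have hn : normSq ((R : ℂ) - c * z) ≠ 0 := by simpa using hD
  rw [div_im, Complex.sq_norm]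
  field_simp
  simp only [mul_im, ofReal_re, ofReal_im, zero_mul, add_zero, sub_re, mul_re, hc, mul_zero,
    zero_sub, sub_neg_eq_add, sub_zero, sub_im, mul_neg, normSq_apply, neg_mul, neg_neg]
  ring

lemma horoHeight_mobiusShift (R t : ℝ) {c : ℂ} (hc : c.re = 0) (w : ℂ × E) :
    horoHeight (t + c.im / R) (mobiusShift R c w)
      = R ^ 2 / normSq (R - c * w.1) * horoHeight t w := by
  have hnorm : ‖(R : ℂ) / (R - c * w.1)‖ ^ 2 = R ^ 2 / normSq (R - c * w.1) := by
    rw [Complex.sq_norm, normSq_div, normSq_ofReal, sq]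
  have hnorm₁ : ‖(R : ℂ) * w.1 / (R - c * w.1)‖ ^ 2
      = R ^ 2 / normSq (R - c * w.1) * ‖w.1‖ ^ 2 := by
    rw [mul_div_right_comm, norm_mul, mul_pow, hnorm]
  simp only [horoHeight, mobiusShift, norm_smul, mul_pow, hnorm, hnorm₁,
    im_ofReal_mul_div_sub_mul R hc]
  rcases eq_or_ne R 0 with rfl | hR
  · simp
  field_simp
  ring

theorem bijOn_mobiusShift_I {R : ℝ} (hR : 0 < R) :
    BijOn (mobiusShift R I) {w : ℂ × E | 0 < horoHeight 0 w} {w | 0 < horoHeight R⁻¹ w} := by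
  have hR' : (R : ℂ) ≠ 0 := ofReal_ne_zero.mpr hR.ne'
  have hD {w : ℂ × E} (hw : 0 < horoHeight 0 w) : (R : ℂ) - I * w.1 ≠ 0 :=
    ofReal_sub_I_mul_ne_zero hR.le (im_pos_of_horoHeight_zero_pos hw)
  refine InvOn.bijOn (f' := mobiusShift R (-I)) ⟨fun w hw => ?_, fun η hη => ?_⟩
    (fun w hw => ?_) (fun η hη => ?_)
  · rw [mobiusShift_mobiusShift hR' _ _ (hD hw), add_neg_cancel, mobiusShift_zero hR']
  · rw [mobiusShift_mobiusShift hR' _ _ (ofReal_sub_neg_I_mul_ne_zero_of_horoHeight_pos hη),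
      neg_add_cancel, mobiusShift_zero hR']
  · have h := horoHeight_mobiusShift R 0 (c := I) (by simp) w
    rw [I_im, zero_add, one_div] at h
    rw [mem_ofPred_eq, h]
    exact mul_pos (div_pos (by positivity) (normSq_pos.mpr (hD hw))) hw
  · have h := horoHeight_mobiusShift R R⁻¹ (c := -I) (by simp) η
    rw [neg_im, I_im, neg_div, one_div, add_neg_cancel] at h
    rw [mem_ofPred_eq, h]
    exact mul_pos (div_pos (by positivity)
      (normSq_pos.mpr (ofReal_sub_neg_I_mul_ne_zero_of_horoHeight_pos hη))) hη

end MobiusShift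

theorem siegel_maps_to_horosphere_general (q : ℕ) (R : ℝ) (hR : 0 < R) :
    (∀ w : ℂ × EuclideanSpace ℂ (Fin (q - 1)), 0 < w.1.im →
        (R : ℂ) - Complex.I * w.1 ≠ 0) ∧
    Set.BijOn
      (fun w : ℂ × EuclideanSpace ℂ (Fin (q - 1)) =>
        ((R : ℂ) * w.1 / ((R : ℂ) - Complex.I * w.1),
          ((R : ℂ) / ((R : ℂ) - Complex.I * w.1)) • w.2))
      {w : ℂ × EuclideanSpace ℂ (Fin (q - 1)) | ‖w.2‖ ^ 2 < w.1.im}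
      {η : ℂ × EuclideanSpace ℂ (Fin (q - 1)) |
        ‖η.2‖ ^ 2 + ‖η.1‖ ^ 2 / R < η.1.im} := by
  refine ⟨fun w hw => ofReal_sub_I_mul_ne_zero hR.le hw, ?_⟩
  have hsiegel : {w : ℂ × EuclideanSpace ℂ (Fin (q - 1)) | ‖w.2‖ ^ 2 < w.1.im}
      = {w | 0 < horoHeight 0 w} := by
    ext w
    simp [horoHeight]
  have hhoro : {η : ℂ × EuclideanSpace ℂ (Fin (q - 1)) | ‖η.2‖ ^ 2 + ‖η.1‖ ^ 2 / R < η.1.im}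
      = {η | 0 < horoHeight R⁻¹ η} := by
    ext η
    simp only [mem_ofPred_eq, horoHeight, ← div_eq_inv_mul, sub_pos, sub_sub, add_comm]
  rw [hsiegel, hhoro]
  exact bijOn_mobiusShift_I hR

/-- For `R > 0`, the map `T(w₁, w') = (R w₁/(R − i w₁), R w'/(R − i w₁))` is well
defined on the Siegel half-space `ℍ^q` (since `R − i w₁ ≠ 0` when `Im w₁ > 0`) and
maps `ℍ^q` bijectively onto the horosphere
`E_{ℍ^q}(I, 0, R) = {(η₁, η') : Im η₁ > ‖η'‖² + |η₁|²/R}`. -/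
theorem siegel_maps_to_horosphere (q : ℕ) (hq : 1 ≤ q) (R : ℝ) (hR : 0 < R) :
    (∀ w : ℂ × EuclideanSpace ℂ (Fin (q - 1)), 0 < w.1.im →
        (R : ℂ) - Complex.I * w.1 ≠ 0) ∧
    Set.BijOn
      (fun w : ℂ × EuclideanSpace ℂ (Fin (q - 1)) =>
        ((R : ℂ) * w.1 / ((R : ℂ) - Complex.I * w.1),
          ((R : ℂ) / ((R : ℂ) - Complex.I * w.1)) • w.2))
      {w : ℂ × EuclideanSpace ℂ (Fin (q - 1)) | ‖w.2‖ ^ 2 < w.1.im}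
      {η : ℂ × EuclideanSpace ℂ (Fin (q - 1)) |
        ‖η.2‖ ^ 2 + ‖η.1‖ ^ 2 / R < η.1.im} :=
  siegel_maps_to_horosphere_general q R hR
end
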